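/- Let X be a locally compact, Hausdorff, connected space, let ρ be a quasi-linear functional on C_c(X) (or on C₀(X)), and let μ = μ_ρ be the associated compact-finite topological measure. If K ⊆ X is compact and f, g ∈ C_c(X) have supp f, supp g ⊆ K, then: (i) if f, g ≥ 0 then |ρ(f) − ρ(g)| ≤ ‖f − g‖_∞ · μ(K); (ii) in general |ρ(f) − ρ(g)| ≤ 2‖f − g‖_∞ · μ(K); (iii) |ρ(f)| ≤ ‖f‖_∞ · μ(supp f). Consequently ρ is continuous on C_c(X) with respect to the topology of uniform convergence on compact sets. If moreover μ(X) < ∞, then |ρ(f)| ≤ ‖f‖_∞ · μ(X), |ρ(f) − ρ(g)| ≤ ‖f − g‖_∞ · μ(X) for f, g ≥ 0, and |ρ(f) − ρ(g)| ≤ 2‖f − g‖_∞ · μ(X) in general, so ρ is uniformly continuous. -/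

import Mathlib

open Set Filter Topology MeasureTheory
open scoped ENNReal BoundedContinuousFunction

universe u

/-- A topological measure on `X`: a set function on subsets of `X` (only its values on open
and closed sets matter), not identically `∞` on open/closed sets, satisfying (TM1)–(TM3). -/
structure TopMeasure (X : Type u) [TopologicalSpace X] where
  toFun : Set X → ℝ≥0∞
  not_all_top : ∃ A : Set X, (IsOpen A ∨ IsClosed A) ∧ toFun A ≠ ∞
  tm1 : ∀ A B : Set X, Disjoint A B → (IsOpen A ∨ IsCompact A) → (IsOpen B ∨ IsCompact B) →
      (IsOpen (A ∪ B) ∨ IsCompact (A ∪ B)) → toFun (A ∪ B) = toFun A + toFun B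
  tm2 : ∀ U : Set X, IsOpen U → toFun U = ⨆ K ∈ {K : Set X | IsCompact K ∧ K ⊆ U}, toFun K
  tm3 : ∀ F : Set X, IsClosed F → toFun F = ⨅ U ∈ {U : Set X | IsOpen U ∧ F ⊆ U}, toFun U

/-- `μ` is compact-finite. -/
def TopMeasure.CompactFinite {X : Type u} [TopologicalSpace X] (μ : TopMeasure X) : Prop :=
  ∀ K : Set X, IsCompact K → μ.toFun K ≠ ∞

/-- The set of compactly supported continuous functions, inside `C_b(X)`. -/
def CcS (X : Type u) [TopologicalSpace X] : Set (X →ᵇ ℝ) :=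
  {f | HasCompactSupport (f : X → ℝ)}

/-- The set of continuous functions vanishing at infinity, inside `C_b(X)`. -/
def C0S (X : Type u) [TopologicalSpace X] : Set (X →ᵇ ℝ) :=
  {f | Tendsto (f : X → ℝ) (cocompact X) (nhds 0)}

/-- `𝔅` is a (non-unital) subalgebra of `C_b(X)`. -/
def IsSubalgS {X : Type u} [TopologicalSpace X] (𝔅 : Set (X →ᵇ ℝ)) : Prop :=
  (∀ f g : X →ᵇ ℝ, f ∈ 𝔅 → g ∈ 𝔅 → f + g ∈ 𝔅) ∧
  (∀ f g : X →ᵇ ℝ, f ∈ 𝔅 → g ∈ 𝔅 → f * g ∈ 𝔅) ∧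
  (∀ (c : ℝ) (f : X →ᵇ ℝ), f ∈ 𝔅 → c • f ∈ 𝔅)

/-- The singly generated subalgebra `B(h)`: the smallest closed (in `𝔅`) subalgebra of `𝔅`
containing `h`. -/
def sgen {X : Type u} [TopologicalSpace X] (𝔅 : Set (X →ᵇ ℝ)) (h : X →ᵇ ℝ) :
    Set (X →ᵇ ℝ) :=
  ⋂₀ {S : Set (X →ᵇ ℝ) | S ⊆ 𝔅 ∧ h ∈ S ∧
      (∀ f g : X →ᵇ ℝ, f ∈ S → g ∈ S → f + g ∈ S) ∧
      (∀ f g : X →ᵇ ℝ, f ∈ S → g ∈ S → f * g ∈ S) ∧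
      (∀ (c : ℝ) (f : X →ᵇ ℝ), f ∈ S → c • f ∈ S) ∧
      IsClosed {x : ↥𝔅 | (x : X →ᵇ ℝ) ∈ S}}

/-- A signed quasi-linear functional on `𝔅` (QI1), (QI2). -/
structure SignedQLF {X : Type u} [TopologicalSpace X] (𝔅 : Set (X →ᵇ ℝ)) where
  toFun : (X →ᵇ ℝ) → ℝ
  smul_eq : ∀ (a : ℝ) (f : X →ᵇ ℝ), f ∈ 𝔅 → toFun (a • f) = a * toFun f
  add_eq : ∀ h ∈ 𝔅, ∀ f g : X →ᵇ ℝ, f ∈ sgen 𝔅 h → g ∈ sgen 𝔅 h →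
      toFun (f + g) = toFun f + toFun g

/-- A (positive) quasi-linear functional on `𝔅` (QI1)–(QI3). -/
structure QLF {X : Type u} [TopologicalSpace X] (𝔅 : Set (X →ᵇ ℝ)) extends SignedQLF 𝔅 where
  pos : ∀ f : X →ᵇ ℝ, f ∈ 𝔅 → 0 ≤ f → 0 ≤ toFun f

/-- `‖ρ‖ = sup {ρ(f) : f ∈ 𝔅, 0 ≤ f ≤ 1}`, as an extended real number. -/
noncomputable def qnorm {X : Type u} [TopologicalSpace X] {𝔅 : Set (X →ᵇ ℝ)} (ρ : QLF 𝔅) :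
    ℝ≥0∞ :=
  ⨆ f ∈ {f : X →ᵇ ℝ | f ∈ 𝔅 ∧ 0 ≤ f ∧ f ≤ 1}, ENNReal.ofReal (ρ.toFun f)

/-- `m` is the measure `m_f` on `ℝ` associated with a finite topological measure `μ` and
`f ∈ C₀(X)` (case (A)): `m(W) = μ(f⁻¹(W))` for every open `W ⊆ ℝ`. -/
def IsMfA {X : Type u} [TopologicalSpace X] (μ : TopMeasure X) (f : X →ᵇ ℝ)
    (m : Measure ℝ) : Prop :=
  ∀ W : Set ℝ, IsOpen W → m W = μ.toFun ((f : X → ℝ) ⁻¹' W)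

/-- `m` is the measure `m_f` on `ℝ` associated with a compact-finite topological measure `μ`
and `f ∈ C_c(X)` (case (B)): `m(W) = μ(f⁻¹(W \ {0}))` for every open `W ⊆ ℝ`. -/
def IsMfB {X : Type u} [TopologicalSpace X] (μ : TopMeasure X) (f : X →ᵇ ℝ)
    (m : Measure ℝ) : Prop :=
  ∀ W : Set ℝ, IsOpen W → m W = μ.toFun ((f : X → ℝ) ⁻¹' (W \ {0}))

/-- The support of a (Borel) measure on `ℝ`. -/
def msupp (m : Measure ℝ) : Set ℝ := {x : ℝ | ∀ U ∈ nhds x, 0 < m U}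

/-- The set function `μ_ρ` on open sets:
`μ_ρ(U) = sup {ρ(f) : f ∈ C_c(X), 0 ≤ f ≤ 1, supp f ⊆ U}`. -/
noncomputable def muO {X : Type u} [TopologicalSpace X] {𝔅 : Set (X →ᵇ ℝ)} (ρ : QLF 𝔅)
    (U : Set X) : ℝ≥0∞ :=
  ⨆ f ∈ {f : X →ᵇ ℝ | f ∈ CcS X ∧ 0 ≤ f ∧ f ≤ 1 ∧ tsupport (f : X → ℝ) ⊆ U},
    ENNReal.ofReal (ρ.toFun f)

/-- The set function `μ_ρ` on closed sets: `μ_ρ(F) = inf {μ_ρ(U) : U open, F ⊆ U}`. -/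
noncomputable def muC {X : Type u} [TopologicalSpace X] {𝔅 : Set (X →ᵇ ℝ)} (ρ : QLF 𝔅)
    (F : Set X) : ℝ≥0∞ :=
  ⨅ U ∈ {U : Set X | IsOpen U ∧ F ⊆ U}, muO ρ U

open Classical in
/-- The set function `μ_ρ`. -/
noncomputable def muR {X : Type u} [TopologicalSpace X] {𝔅 : Set (X →ᵇ ℝ)} (ρ : QLF 𝔅) :
    Set X → ℝ≥0∞ :=
  fun A => if IsOpen A then muO ρ A else muC ρ A

/-- `ρ = ρ_μ` on `C₀(X)` (case (A)): for every `f ∈ C₀(X)` and every measure `m_f`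
associated with `μ` and `f`, `ρ(f) = ∫_ℝ id dm_f`. -/
def ReprA {X : Type u} [TopologicalSpace X] {𝔅 : Set (X →ᵇ ℝ)} (μ : TopMeasure X)
    (ρ : QLF 𝔅) : Prop :=
  ∀ f ∈ C0S X, ∀ m : Measure ℝ, IsMfA μ f m → ρ.toFun f = ∫ t, t ∂m

/-- `ρ = ρ_μ` on `C_c(X)` (case (B)). -/
def ReprB {X : Type u} [TopologicalSpace X] {𝔅 : Set (X →ᵇ ℝ)} (μ : TopMeasure X)
    (ρ : QLF 𝔅) : Prop :=
  ∀ f ∈ CcS X, ∀ m : Measure ℝ, IsMfB μ f m → ρ.toFun f = ∫ t, t ∂m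

/-!
The crux is that `ρ` is monotone on nonnegative functions of `C_c(X)`, although it is additive,
hence monotone, only on each `B(h)`. Let `0 ≤ f ≤ g` and cut both into horizontal layers
`min (max (· - k c) 0) c` of height `c`; the layers of `f` lie in `B(f)`, so `ρ f` is the sum of
their values, and likewise for `g`. Wherever the `(k+1)`-st layer of `f` is nonzero, the `k`-th
layer of `g` equals `c`, so both are continuous functions of their sum and the first lies below
the second: its `ρ`-value is smaller. The bottom layer of `f` is dominated in the same way by
`c χ`, for a bump function `χ` covering the support of `f`. Hence `ρ f ≤ ρ g + c ρ χ`, and `c → 0`.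

For `f, g ≥ 0` supported in `K` and `δ = ‖f - g‖`, split `f = min f δ + (f - δ)⁺` inside `B(f)`:
the first part contributes at most `δ μ(K)` by the definition of `μ_ρ`, the second lies below
`g`. The general estimates follow by splitting into positive and negative parts.
-/

open BoundedContinuousFunction

section CompactSupport

variable {X : Type u} [TopologicalSpace X]

lemma zero_mem_CcS : (0 : X →ᵇ ℝ) ∈ CcS X := HasCompactSupport.zero

lemma CcS_subset_C0S : CcS X ⊆ C0S X := fun _ hf => HasCompactSupport.is_zero_at_infty hf

lemma abs_apply_sub_apply_le_norm (f g : X →ᵇ ℝ) (x : X) : |f x - g x| ≤ ‖f - g‖ := by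
  simpa [Real.dist_eq, dist_eq_norm] using dist_coe_le_dist (f := f) (g := g) x

/-- `F = φ ∘ h` for a continuous `φ` with `φ 0 = 0`; for `h ∈ C_c(X)` these functions make up
`B(h)`. -/
def IsCompOf (h F : X →ᵇ ℝ) : Prop :=
  ∃ φ : ℝ → ℝ, Continuous φ ∧ φ 0 = 0 ∧ ⇑F = φ ∘ ⇑h

namespace IsCompOf

variable {h F : X →ᵇ ℝ}

lemma mem_CcS (hF : IsCompOf h F) (hh : h ∈ CcS X) : F ∈ CcS X := by
  obtain ⟨φ, -, hφ0, hFφ⟩ := hF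
  change HasCompactSupport ⇑F
  rw [hFφ]
  exact hh.comp_left hφ0

lemma tsupport_subset (hF : IsCompOf h F) : tsupport F ⊆ tsupport h := by
  obtain ⟨φ, -, hφ0, hFφ⟩ := hF
  rw [hFφ]
  exact tsupport_comp_subset hφ0 h

lemma apply_eq_zero (hF : IsCompOf h F) {x : X} (hx : h x = 0) : F x = 0 := by
  obtain ⟨φ, -, hφ0, hFφ⟩ := hF
  rw [hFφ, Function.comp_apply, hx, hφ0]

end IsCompOf

lemma isCompOf_smul (c : ℝ) (h : X →ᵇ ℝ) : IsCompOf h (c • h) :=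
  ⟨(c * ·), by fun_prop, mul_zero c, rfl⟩

lemma isCompOf_posPart (h : X →ᵇ ℝ) : IsCompOf h h⁺ :=
  ⟨fun t => max t 0, by fun_prop, max_self 0, funext fun x => by simp [posPart_def]⟩

lemma isCompOf_negPart (h : X →ᵇ ℝ) : IsCompOf h h⁻ :=
  ⟨fun t => max (-t) 0, by fun_prop, by simp, funext fun x => by simp [negPart_def]⟩

lemma norm_posPart_sub_posPart_le (f g : X →ᵇ ℝ) : ‖f⁺ - g⁺‖ ≤ ‖f - g‖ :=
  norm_sup_sub_sup_le_norm f g 0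

lemma norm_negPart_sub_negPart_le (f g : X →ᵇ ℝ) : ‖f⁻ - g⁻‖ ≤ ‖f - g‖ := by
  have := norm_sup_sub_sup_le_norm (-f) (-g) 0
  rwa [neg_sub_neg, norm_sub_rev g, ← negPart_def, ← negPart_def] at this

end CompactSupport

section SinglyGenerated

variable {X : Type u} [TopologicalSpace X] {𝔅 : Set (X →ᵇ ℝ)} {h f g : X →ᵇ ℝ}

lemma self_mem_sgen : h ∈ sgen 𝔅 h := fun _ hS => hS.2.1

lemma add_mem_sgen (hf : f ∈ sgen 𝔅 h) (hg : g ∈ sgen 𝔅 h) : f + g ∈ sgen 𝔅 h :=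
  fun S hS => hS.2.2.1 f g (hf S hS) (hg S hS)

lemma mul_mem_sgen (hf : f ∈ sgen 𝔅 h) (hg : g ∈ sgen 𝔅 h) : f * g ∈ sgen 𝔅 h :=
  fun S hS => hS.2.2.2.1 f g (hf S hS) (hg S hS)

lemma smul_mem_sgen (c : ℝ) (hf : f ∈ sgen 𝔅 h) : c • f ∈ sgen 𝔅 h :=
  fun S hS => hS.2.2.2.2.1 c f (hf S hS)

lemma zero_mem_sgen : (0 : X →ᵇ ℝ) ∈ sgen 𝔅 h := by
  simpa using smul_mem_sgen (0 : ℝ) (self_mem_sgen (𝔅 := 𝔅) (h := h))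

lemma sub_mem_sgen (hf : f ∈ sgen 𝔅 h) (hg : g ∈ sgen 𝔅 h) : f - g ∈ sgen 𝔅 h := by
  rw [sub_eq_add_neg, ← neg_one_smul ℝ g]
  exact add_mem_sgen hf (smul_mem_sgen (-1) hg)

lemma pow_succ_mem_sgen (k : ℕ) : h ^ (k + 1) ∈ sgen 𝔅 h := by
  induction k with
  | zero => simpa using self_mem_sgen
  | succ k ih => simpa [pow_succ] using mul_mem_sgen ih self_mem_sgen

lemma sum_mem_sgen {ι : Type*} (s : Finset ι) {F : ι → X →ᵇ ℝ} (hF : ∀ i ∈ s, F i ∈ sgen 𝔅 h) :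
    ∑ i ∈ s, F i ∈ sgen 𝔅 h :=
  Finset.sum_induction F (· ∈ sgen 𝔅 h) (fun _ _ => add_mem_sgen) zero_mem_sgen hF

lemma isClosed_sgen (h : X →ᵇ ℝ) : IsClosed {x : 𝔅 | (x : X →ᵇ ℝ) ∈ sgen 𝔅 h} := by
  change IsClosed (Subtype.val ⁻¹' sgen 𝔅 h)
  rw [sgen, preimage_sInter]
  exact isClosed_biInter fun S hS => hS.2.2.2.2.2

lemma exists_mem_sgen_eq_eval (h : X →ᵇ ℝ) {q : Polynomial ℝ} (hq : q.eval 0 = 0) :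
    ∃ G ∈ sgen 𝔅 h, ⇑G = fun x => q.eval (h x) := by
  refine ⟨∑ k ∈ Finset.range q.natDegree, q.coeff (k + 1) • h ^ (k + 1),
    sum_mem_sgen _ fun k _ => smul_mem_sgen _ (pow_succ_mem_sgen k), funext fun x => ?_⟩
  rw [Polynomial.eval_eq_sum_range, Finset.sum_range_succ', Polynomial.coeff_zero_eq_eval_zero, hq]
  simp

/-- Weierstrass approximation, with the closedness of `B(h)` in `𝔅`. -/
lemma IsCompOf.mem_sgen (h𝔅 : CcS X ⊆ 𝔅) (hh : h ∈ CcS X) {F : X →ᵇ ℝ} (hF : IsCompOf h F) :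
    F ∈ sgen 𝔅 h := by
  suffices (⟨F, h𝔅 (hF.mem_CcS hh)⟩ : 𝔅) ∈ closure {x : 𝔅 | (x : X →ᵇ ℝ) ∈ sgen 𝔅 h} from
    (isClosed_sgen h).closure_subset this
  rw [Metric.mem_closure_iff]
  intro ε hε
  obtain ⟨φ, hφ, hφ0, hFφ⟩ := hF
  obtain ⟨p, hp⟩ := exists_polynomial_near_of_continuousOn (-‖h‖) ‖h‖ φ hφ.continuousOn (ε / 4)
    (by positivity)
  set q := p - Polynomial.C (p.eval 0)
  obtain ⟨G, hG, hGq⟩ := exists_mem_sgen_eq_eval (𝔅 := 𝔅) h (q := q) (by simp [q])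
  have hGh : IsCompOf h G := ⟨fun t => q.eval t, q.continuous, by simp [q], hGq⟩
  refine ⟨⟨G, h𝔅 (hGh.mem_CcS hh)⟩, hG, ?_⟩
  rw [Subtype.dist_eq, dist_eq_norm]
  refine lt_of_le_of_lt ((norm_le (by positivity)).2 fun x => ?_) (by linarith : ε / 2 < ε)
  have hx : h x ∈ Icc (-‖h‖) ‖h‖ := abs_le.1 (h.norm_coe_le_norm x)
  have h0 : (0 : ℝ) ∈ Icc (-‖h‖) ‖h‖ := ⟨by simp, norm_nonneg h⟩
  have hpx := abs_lt.1 (hp _ hx)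
  have hp0 := abs_lt.1 (hp 0 h0)
  rw [hφ0] at hp0
  rw [coe_sub, Pi.sub_apply, hFφ, hGq, Real.norm_eq_abs, abs_le]
  simp only [Function.comp_apply, q, Polynomial.eval_sub, Polynomial.eval_C]
  constructor <;> linarith

end SinglyGenerated

namespace QLF

variable {X : Type u} [TopologicalSpace X] {𝔅 : Set (X →ᵇ ℝ)} (ρ : QLF 𝔅)

lemma toFun_zero (h0 : (0 : X →ᵇ ℝ) ∈ 𝔅) : ρ.toFun 0 = 0 := by
  simpa using ρ.smul_eq 0 0 h0

lemma toFun_le_of_mem_sgen {h f g : X →ᵇ ℝ} (hh : h ∈ 𝔅) (hf : f ∈ sgen 𝔅 h)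
    (hg : g ∈ sgen 𝔅 h) (hgf : g - f ∈ 𝔅) (hfg : f ≤ g) : ρ.toFun f ≤ ρ.toFun g := by
  have hadd := ρ.add_eq h hh f (g - f) hf (sub_mem_sgen hg hf)
  rw [add_sub_cancel] at hadd
  linarith [ρ.pos _ hgf (sub_nonneg.2 hfg)]

lemma toFun_sum_of_mem_sgen {h : X →ᵇ ℝ} (h0 : (0 : X →ᵇ ℝ) ∈ 𝔅) (hh : h ∈ 𝔅)
    {F : ℕ → X →ᵇ ℝ} (hF : ∀ k, F k ∈ sgen 𝔅 h) (n : ℕ) :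
    ρ.toFun (∑ k ∈ Finset.range n, F k) = ∑ k ∈ Finset.range n, ρ.toFun (F k) := by
  induction n with
  | zero => simpa using ρ.toFun_zero h0
  | succ n ih =>
    rw [Finset.sum_range_succ, Finset.sum_range_succ,
      ρ.add_eq h hh _ _ (sum_mem_sgen _ fun k _ => hF k) (hF n), ih]

/-- Both functions are continuous functions of `f + g`: `f = (f + g - a)⁺` and
`g = max (min (f + g) a) 0`. -/
lemma toFun_le_of_eq_bound (h𝔅 : CcS X ⊆ 𝔅) {f g : X →ᵇ ℝ} {a : ℝ} (ha : 0 ≤ a)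
    (hf : f ∈ CcS X) (hg : g ∈ CcS X) (hf0 : 0 ≤ f) (hfa : ∀ x, f x ≤ a) (hg0 : 0 ≤ g)
    (hga : ∀ x, g x ≤ a) (hfg : ∀ x, f x ≠ 0 → g x = a) : ρ.toFun f ≤ ρ.toFun g := by
  have hsum : f + g ∈ CcS X := HasCompactSupport.add hf hg
  have hf0' : ∀ x, 0 ≤ f x := hf0
  have hg0' : ∀ x, 0 ≤ g x := hg0
  have hcases : ∀ x, f x = 0 ∨ g x = a := fun x => (em (f x = 0)).imp_right (hfg x)
  have hf' : IsCompOf (f + g) f := ⟨fun t => max (t - a) 0, by fun_prop, by simp [ha],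
    funext fun x => by
      rcases hcases x with h | h <;> simp [h, hf0' x, hga x]⟩
  have hg' : IsCompOf (f + g) g := ⟨fun t => max (min t a) 0, by fun_prop, by simp [ha],
    funext fun x => by
      rcases hcases x with h | h <;> simp [h, hf0' x, hg0' x, hga x, ha]⟩
  refine ρ.toFun_le_of_mem_sgen (h𝔅 hsum) (hf'.mem_sgen h𝔅 hsum) (hg'.mem_sgen h𝔅 hsum)
    (h𝔅 (HasCompactSupport.sub hg hf)) fun x => ?_
  change f x ≤ g x
  rcases hcases x with h | h
  · rw [h]; exact hg0' x
  · rw [h]; exact hfa x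

lemma ofReal_toFun_le_muO {u : X →ᵇ ℝ} {U : Set X} (hu : u ∈ CcS X) (hu0 : 0 ≤ u) (hu1 : u ≤ 1)
    (huU : tsupport u ⊆ U) : ENNReal.ofReal (ρ.toFun u) ≤ muO ρ U :=
  le_biSup (fun v => ENNReal.ofReal (ρ.toFun v)) ⟨hu, hu0, hu1, huU⟩

lemma muO_mono {U V : Set X} (hUV : U ⊆ V) : muO ρ U ≤ muO ρ V :=
  iSup₂_le fun _ hu => ρ.ofReal_toFun_le_muO hu.1 hu.2.1 hu.2.2.1 (hu.2.2.2.trans hUV)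

lemma ofReal_toFun_le_muR {u : X →ᵇ ℝ} {A : Set X} (hu : u ∈ CcS X) (hu0 : 0 ≤ u) (hu1 : u ≤ 1)
    (huA : tsupport u ⊆ A) : ENNReal.ofReal (ρ.toFun u) ≤ muR ρ A := by
  unfold muR
  split_ifs
  · exact ρ.ofReal_toFun_le_muO hu hu0 hu1 huA
  · exact le_iInf₂ fun U hU => ρ.ofReal_toFun_le_muO hu hu0 hu1 (huA.trans hU.2)

lemma muR_le_muO {A U : Set X} (hU : IsOpen U) (hAU : A ⊆ U) : muR ρ A ≤ muO ρ U := by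
  unfold muR
  split_ifs
  · exact ρ.muO_mono hAU
  · exact iInf₂_le U ⟨hU, hAU⟩

lemma muR_toReal_le_univ (hfin : muR ρ univ ≠ ∞) (A : Set X) :
    (muR ρ A).toReal ≤ (muR ρ univ).toReal := by
  refine ENNReal.toReal_mono hfin ((ρ.muR_le_muO isOpen_univ (subset_univ A)).trans_eq ?_)
  exact (if_pos isOpen_univ).symm

lemma muO_le_ofReal_toFun (h𝔅 : CcS X ⊆ 𝔅) {χ : X →ᵇ ℝ} {U : Set X} (hχ : χ ∈ CcS X)
    (hχ0 : 0 ≤ χ) (hχ1 : χ ≤ 1) (hχU : ∀ x ∈ U, χ x = 1) :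
    muO ρ U ≤ ENNReal.ofReal (ρ.toFun χ) :=
  iSup₂_le fun _ ⟨hu, hu0, hu1, huU⟩ => ENNReal.ofReal_le_ofReal <|
    ρ.toFun_le_of_eq_bound h𝔅 zero_le_one hu hχ hu0 hu1 hχ0 hχ1 fun x hx =>
      hχU x (huU (subset_tsupport _ hx))

end QLF

lemma exists_CcS_eq_one_of_isCompact {X : Type u} [TopologicalSpace X] [LocallyCompactSpace X]
    [T2Space X] {K : Set X} (hK : IsCompact K) :
    ∃ χ ∈ CcS X, 0 ≤ χ ∧ χ ≤ 1 ∧ ∃ U, IsOpen U ∧ K ⊆ U ∧ ∀ x ∈ U, χ x = 1 := by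
  obtain ⟨K', hK', hKK'⟩ := exists_compact_superset hK
  obtain ⟨χ, hχ1, -, hχc, hχ01⟩ :=
    exists_continuous_one_zero_of_isCompact hK' isClosed_empty (disjoint_empty _)
  refine ⟨.ofNormedAddCommGroup χ χ.continuous 1 fun x => ?_, hχc, fun x => (hχ01 x).1,
    fun x => (hχ01 x).2, interior K', isOpen_interior, hKK', fun x hx => hχ1 (interior_subset hx)⟩
  rw [Real.norm_eq_abs, abs_le]
  constructor <;> linarith [(hχ01 x).1, (hχ01 x).2]

section Layer

variable {X : Type u} [TopologicalSpace X]

lemma sum_range_min_max_sub {c t : ℝ} (hc : 0 ≤ c) (ht : 0 ≤ t) (n : ℕ) :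
    ∑ k ∈ Finset.range n, min (max (t - k * c) 0) c = min t (n * c) := by
  induction n with
  | zero => simp [ht]
  | succ n ih =>
    rw [Finset.sum_range_succ, ih]
    push_cast
    rcases le_total t (n * c) with h | h
    · rw [min_eq_left h, max_eq_right (by linarith), min_eq_left hc, min_eq_left (by linarith)]
      ring
    · rw [min_eq_right h, max_eq_left (by linarith), ← min_add_add_left, add_sub_cancel]
      ring_nf

noncomputable def layer (c : ℝ) (k : ℕ) (f : X →ᵇ ℝ) : X →ᵇ ℝ :=
  ((f - const X (k * c)) ⊔ 0) ⊓ const X c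

variable {c : ℝ} {k n : ℕ} {f : X →ᵇ ℝ}

lemma layer_apply (c : ℝ) (k : ℕ) (f : X →ᵇ ℝ) (x : X) :
    layer c k f x = min (max (f x - k * c) 0) c := by
  simp [layer]

lemma isCompOf_layer (hc : 0 ≤ c) (k : ℕ) (f : X →ᵇ ℝ) : IsCompOf f (layer c k f) :=
  ⟨fun t => min (max (t - k * c) 0) c, by fun_prop, by simp [hc, mul_nonneg],
    funext (layer_apply c k f)⟩

lemma layer_nonneg (hc : 0 ≤ c) : 0 ≤ layer c k f :=
  fun x => by simpa [layer_apply] using hc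

lemma layer_le (x : X) : layer c k f x ≤ c := by
  simp [layer_apply]

lemma layer_eq_of_le {x : X} (hx : (k + 1) * c ≤ f x) : layer c k f x = c := by
  rw [layer_apply, min_eq_right (le_max_of_le_left (by linarith))]

lemma lt_of_layer_succ_ne_zero (hc : 0 ≤ c) {x : X} (hx : layer c (k + 1) f x ≠ 0) :
    (k + 1) * c < f x := by
  by_contra! h
  rw [layer_apply, max_eq_right (by push_cast; linarith), min_eq_left hc] at hx
  exact hx rfl

lemma sum_layer (hc : 0 ≤ c) (hf0 : 0 ≤ f) (hfn : ∀ x, f x ≤ n * c) :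
    ∑ k ∈ Finset.range n, layer c k f = f := by
  ext x
  rw [coe_sum, Finset.sum_apply]
  simp only [layer_apply]
  exact (sum_range_min_max_sub hc (hf0 x) n).trans (min_eq_left (hfn x))

end Layer

namespace QLF

variable {X : Type u} [TopologicalSpace X] {𝔅 : Set (X →ᵇ ℝ)} (ρ : QLF 𝔅)

lemma toFun_eq_sum_layer (h𝔅 : CcS X ⊆ 𝔅) {c : ℝ} (hc : 0 ≤ c) {n : ℕ} {f : X →ᵇ ℝ}
    (hf : f ∈ CcS X) (hf0 : 0 ≤ f) (hfn : ∀ x, f x ≤ n * c) :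
    ρ.toFun f = ∑ k ∈ Finset.range n, ρ.toFun (layer c k f) := by
  conv_lhs => rw [← sum_layer hc hf0 hfn]
  exact ρ.toFun_sum_of_mem_sgen (h𝔅 zero_mem_CcS) (h𝔅 hf)
    (fun k => (isCompOf_layer hc k f).mem_sgen h𝔅 hf) n

lemma toFun_eq_posPart_sub_negPart (h𝔅 : CcS X ⊆ 𝔅) {f : X →ᵇ ℝ} (hf : f ∈ CcS X) :
    ρ.toFun f = ρ.toFun f⁺ - ρ.toFun f⁻ := by
  have h := ρ.add_eq f (h𝔅 hf) f⁺ ((-1 : ℝ) • f⁻) ((isCompOf_posPart f).mem_sgen h𝔅 hf)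
    (smul_mem_sgen _ ((isCompOf_negPart f).mem_sgen h𝔅 hf))
  rwa [ρ.smul_eq _ _ (h𝔅 ((isCompOf_negPart f).mem_CcS hf)), neg_one_smul ℝ f⁻,
    ← sub_eq_add_neg, posPart_sub_negPart, neg_one_mul, ← sub_eq_add_neg] at h

lemma toFun_layer_succ_le_layer (h𝔅 : CcS X ⊆ 𝔅) {c : ℝ} (hc : 0 ≤ c) {f g : X →ᵇ ℝ}
    (hf : f ∈ CcS X) (hg : g ∈ CcS X) (hfg : f ≤ g) (k : ℕ) :
    ρ.toFun (layer c (k + 1) f) ≤ ρ.toFun (layer c k g) := by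
  refine ρ.toFun_le_of_eq_bound h𝔅 hc ((isCompOf_layer hc _ f).mem_CcS hf)
    ((isCompOf_layer hc k g).mem_CcS hg) (layer_nonneg hc) layer_le (layer_nonneg hc) layer_le
    fun x hx => layer_eq_of_le ?_
  exact_mod_cast ((lt_of_layer_succ_ne_zero hc hx).trans_le (hfg x)).le

lemma toFun_layer_zero_le_mul (h𝔅 : CcS X ⊆ 𝔅) {c : ℝ} (hc : 0 ≤ c) {f χ : X →ᵇ ℝ}
    (hf : f ∈ CcS X) (hχ : χ ∈ CcS X) (hχ0 : 0 ≤ χ) (hχ1 : χ ≤ 1)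
    (hχf : ∀ x ∈ tsupport f, χ x = 1) : ρ.toFun (layer c 0 f) ≤ c * ρ.toFun χ := by
  rw [← ρ.smul_eq _ _ (h𝔅 hχ)]
  refine ρ.toFun_le_of_eq_bound h𝔅 hc ((isCompOf_layer hc _ f).mem_CcS hf)
    ((isCompOf_smul c χ).mem_CcS hχ) (layer_nonneg hc) layer_le
    (fun x => mul_nonneg hc (hχ0 x)) (fun x => ?_) fun x hx => ?_
  · simpa using mul_le_of_le_one_right hc (hχ1 x)
  · have hfx : f x ≠ 0 := fun h => hx ((isCompOf_layer hc 0 f).apply_eq_zero h)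
    simp [hχf x (subset_tsupport _ hfx)]

lemma toFun_le_add_mul_of_eq_one (h𝔅 : CcS X ⊆ 𝔅) {c : ℝ} (hc : 0 < c) {f g χ : X →ᵇ ℝ}
    (hf : f ∈ CcS X) (hg : g ∈ CcS X) (hf0 : 0 ≤ f) (hfg : f ≤ g) (hχ : χ ∈ CcS X)
    (hχ0 : 0 ≤ χ) (hχ1 : χ ≤ 1) (hχf : ∀ x ∈ tsupport f, χ x = 1) :
    ρ.toFun f ≤ ρ.toFun g + c * ρ.toFun χ := by
  obtain ⟨n, hn⟩ := exists_nat_ge (‖g‖ / c)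
  have hgn : ∀ x, g x ≤ n * c := fun x =>
    (le_abs_self _).trans ((g.norm_coe_le_norm x).trans ((div_le_iff₀ hc).1 hn))
  have hfn : ∀ x, f x ≤ (n + 1 : ℕ) * c := fun x => by
    have hfgx : f x ≤ g x := hfg x
    push_cast
    linarith [hgn x]
  calc ρ.toFun f = ∑ k ∈ Finset.range n, ρ.toFun (layer c (k + 1) f) + ρ.toFun (layer c 0 f) := by
        rw [ρ.toFun_eq_sum_layer h𝔅 hc.le hf hf0 hfn, Finset.sum_range_succ']
    _ ≤ ∑ k ∈ Finset.range n, ρ.toFun (layer c k g) + c * ρ.toFun χ := by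
        gcongr with k
        · exact ρ.toFun_layer_succ_le_layer h𝔅 hc.le hf hg hfg k
        · exact ρ.toFun_layer_zero_le_mul h𝔅 hc.le hf hχ hχ0 hχ1 hχf
    _ = ρ.toFun g + c * ρ.toFun χ := by
        rw [← ρ.toFun_eq_sum_layer h𝔅 hc.le hg (hf0.trans hfg) hgn]

variable [LocallyCompactSpace X] [T2Space X]

lemma muR_ne_top (h𝔅 : CcS X ⊆ 𝔅) {K : Set X} (hK : IsCompact K) : muR ρ K ≠ ∞ := by
  obtain ⟨χ, hχ, hχ0, hχ1, U, hU, hKU, hχU⟩ := exists_CcS_eq_one_of_isCompact hK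
  exact (((ρ.muR_le_muO hU hKU).trans (ρ.muO_le_ofReal_toFun h𝔅 hχ hχ0 hχ1 hχU)).trans_lt
    ENNReal.ofReal_lt_top).ne

theorem toFun_mono (h𝔅 : CcS X ⊆ 𝔅) {f g : X →ᵇ ℝ} (hf : f ∈ CcS X) (hg : g ∈ CcS X)
    (hf0 : 0 ≤ f) (hfg : f ≤ g) : ρ.toFun f ≤ ρ.toFun g := by
  obtain ⟨χ, hχ, hχ0, hχ1, U, -, hfU, hχU⟩ := exists_CcS_eq_one_of_isCompact hf.isCompact
  have hχpos : 0 ≤ ρ.toFun χ := ρ.pos χ (h𝔅 hχ) hχ0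
  refine le_of_forall_pos_le_add fun ε hε => (ρ.toFun_le_add_mul_of_eq_one h𝔅
    (c := ε / (ρ.toFun χ + 1)) (by positivity) hf hg hf0 hfg hχ hχ0 hχ1
    fun x hx => hχU x (hfU hx)).trans ?_
  gcongr
  rw [div_mul_eq_mul_div, div_le_iff₀ (by positivity)]
  nlinarith

lemma toFun_le_norm_mul_muR (h𝔅 : CcS X ⊆ 𝔅) {u : X →ᵇ ℝ} {K : Set X} (hK : IsCompact K)
    (hu : u ∈ CcS X) (hu0 : 0 ≤ u) (huK : tsupport u ⊆ K) :
    ρ.toFun u ≤ ‖u‖ * (muR ρ K).toReal := by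
  rcases eq_or_ne u 0 with rfl | hne
  · simp [ρ.toFun_zero (h𝔅 zero_mem_CcS)]
  have hpos : 0 < ‖u‖ := norm_pos_iff.2 hne
  have hv := isCompOf_smul ‖u‖⁻¹ u
  have hv1 : ‖u‖⁻¹ • u ≤ 1 := fun x => by
    simpa [inv_mul_le_iff₀ hpos] using (le_abs_self _).trans (u.norm_coe_le_norm x)
  have hv0 : 0 ≤ ‖u‖⁻¹ • u := fun x => mul_nonneg (inv_nonneg.2 hpos.le) (hu0 x)
  have := ρ.ofReal_toFun_le_muR (hv.mem_CcS hu) hv0 hv1 (hv.tsupport_subset.trans huK)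
  rwa [ENNReal.ofReal_le_iff_le_toReal (ρ.muR_ne_top h𝔅 hK), ρ.smul_eq _ _ (h𝔅 hu),
    inv_mul_le_iff₀ hpos] at this

theorem toFun_sub_le_of_nonneg (h𝔅 : CcS X ⊆ 𝔅) {K : Set X} (hK : IsCompact K)
    {f g : X →ᵇ ℝ} (hf : f ∈ CcS X) (hg : g ∈ CcS X) (hfK : tsupport f ⊆ K) (hf0 : 0 ≤ f)
    (hg0 : 0 ≤ g) : ρ.toFun f - ρ.toFun g ≤ ‖f - g‖ * (muR ρ K).toReal := by
  set δ := ‖f - g‖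
  have hf0' : ∀ x, 0 ≤ f x := hf0
  have hlo : IsCompOf f (f ⊓ const X δ) :=
    ⟨fun t => min t δ, by fun_prop, by simp [δ], funext fun x => by simp⟩
  have hhi : IsCompOf f ((f - const X δ) ⊔ 0) :=
    ⟨fun t => max (t - δ) 0, by fun_prop, by simp [δ], funext fun x => by simp⟩
  have hsplit : ρ.toFun f = ρ.toFun (f ⊓ const X δ) + ρ.toFun ((f - const X δ) ⊔ 0) := by
    rw [← ρ.add_eq f (h𝔅 hf) _ _ (hlo.mem_sgen h𝔅 hf) (hhi.mem_sgen h𝔅 hf)]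
    congr 1
    ext x
    simp only [coe_add, Pi.add_apply, coe_inf, coe_sup, coe_sub, Pi.inf_apply, Pi.sup_apply,
      Pi.sub_apply, const_apply, coe_zero, Pi.zero_apply]
    rcases le_total (f x) δ with h | h
    · rw [min_eq_left h, max_eq_right (by linarith), add_zero]
    · rw [min_eq_right h, max_eq_left (by linarith), add_sub_cancel]
  have hlo_norm : ‖f ⊓ const X δ‖ ≤ δ := (norm_le (norm_nonneg _)).2 fun x => by
    simp only [coe_inf, Pi.inf_apply, const_apply, Real.norm_eq_abs]
    rw [abs_of_nonneg (le_min (hf0' x) (norm_nonneg _))]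
    exact min_le_right _ _
  have hlo_le : ρ.toFun (f ⊓ const X δ) ≤ δ * (muR ρ K).toReal :=
    (ρ.toFun_le_norm_mul_muR h𝔅 hK (hlo.mem_CcS hf) (le_inf hf0 (fun x => norm_nonneg _))
      (hlo.tsupport_subset.trans hfK)).trans (by gcongr)
  have hhi_le : ρ.toFun ((f - const X δ) ⊔ 0) ≤ ρ.toFun g :=
    ρ.toFun_mono h𝔅 (hhi.mem_CcS hf) hg le_sup_right (sup_le (fun x => by
      have := abs_le.1 (abs_apply_sub_apply_le_norm f g x)
      change f x - δ ≤ g x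
      linarith) hg0)
  linarith

theorem abs_toFun_sub_le_of_nonneg (h𝔅 : CcS X ⊆ 𝔅) {K : Set X} (hK : IsCompact K)
    {f g : X →ᵇ ℝ} (hf : f ∈ CcS X) (hg : g ∈ CcS X) (hfK : tsupport f ⊆ K)
    (hgK : tsupport g ⊆ K) (hf0 : 0 ≤ f) (hg0 : 0 ≤ g) :
    |ρ.toFun f - ρ.toFun g| ≤ ‖f - g‖ * (muR ρ K).toReal :=
  abs_sub_le_iff.2 ⟨ρ.toFun_sub_le_of_nonneg h𝔅 hK hf hg hfK hf0 hg0,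
    norm_sub_rev f g ▸ ρ.toFun_sub_le_of_nonneg h𝔅 hK hg hf hgK hg0 hf0⟩

theorem abs_toFun_sub_le (h𝔅 : CcS X ⊆ 𝔅) {K : Set X} (hK : IsCompact K) {f g : X →ᵇ ℝ}
    (hf : f ∈ CcS X) (hg : g ∈ CcS X) (hfK : tsupport f ⊆ K) (hgK : tsupport g ⊆ K) :
    |ρ.toFun f - ρ.toFun g| ≤ 2 * ‖f - g‖ * (muR ρ K).toReal := by
  have hpos := ρ.abs_toFun_sub_le_of_nonneg h𝔅 hK ((isCompOf_posPart f).mem_CcS hf)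
    ((isCompOf_posPart g).mem_CcS hg) ((isCompOf_posPart f).tsupport_subset.trans hfK)
    ((isCompOf_posPart g).tsupport_subset.trans hgK) (posPart_nonneg f) (posPart_nonneg g)
  have hneg := ρ.abs_toFun_sub_le_of_nonneg h𝔅 hK ((isCompOf_negPart f).mem_CcS hf)
    ((isCompOf_negPart g).mem_CcS hg) ((isCompOf_negPart f).tsupport_subset.trans hfK)
    ((isCompOf_negPart g).tsupport_subset.trans hgK) (negPart_nonneg f) (negPart_nonneg g)
  rw [ρ.toFun_eq_posPart_sub_negPart h𝔅 hf, ρ.toFun_eq_posPart_sub_negPart h𝔅 hg]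
  calc _ = |(ρ.toFun f⁺ - ρ.toFun g⁺) - (ρ.toFun f⁻ - ρ.toFun g⁻)| := by ring_nf
    _ ≤ |ρ.toFun f⁺ - ρ.toFun g⁺| + |ρ.toFun f⁻ - ρ.toFun g⁻| := abs_sub _ _
    _ ≤ ‖f - g‖ * (muR ρ K).toReal + ‖f - g‖ * (muR ρ K).toReal := by
        gcongr
        · exact hpos.trans (by gcongr; exact norm_posPart_sub_posPart_le f g)
        · exact hneg.trans (by gcongr; exact norm_negPart_sub_negPart_le f g)
    _ = 2 * ‖f - g‖ * (muR ρ K).toReal := by ring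

theorem abs_toFun_le (h𝔅 : CcS X ⊆ 𝔅) {K : Set X} (hK : IsCompact K) {f : X →ᵇ ℝ}
    (hf : f ∈ CcS X) (hfK : tsupport f ⊆ K) : |ρ.toFun f| ≤ ‖f‖ * (muR ρ K).toReal := by
  have bound : ∀ u : X →ᵇ ℝ, IsCompOf f u → 0 ≤ u → ‖u‖ ≤ ‖f‖ →
      0 ≤ ρ.toFun u ∧ ρ.toFun u ≤ ‖f‖ * (muR ρ K).toReal := fun u hu hu0 hnorm =>
    ⟨ρ.pos u (h𝔅 (hu.mem_CcS hf)) hu0,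
      (ρ.toFun_le_norm_mul_muR h𝔅 hK (hu.mem_CcS hf) hu0 (hu.tsupport_subset.trans hfK)).trans
        (by gcongr)⟩
  obtain ⟨hp0, hp⟩ := bound f⁺ (isCompOf_posPart f) (posPart_nonneg f)
    (by simpa using norm_posPart_sub_posPart_le f 0)
  obtain ⟨hn0, hn⟩ := bound f⁻ (isCompOf_negPart f) (negPart_nonneg f)
    (by simpa using norm_negPart_sub_negPart_le f 0)
  rw [ρ.toFun_eq_posPart_sub_negPart h𝔅 hf]
  exact abs_sub_le_of_nonneg_of_le hp0 hp hn0 hn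

theorem tendsto_toFun (h𝔅 : CcS X ⊆ 𝔅) {K : Set X} (hK : IsCompact K) {F : ℕ → X →ᵇ ℝ}
    {f : X →ᵇ ℝ} (hF : ∀ n, F n ∈ CcS X) (hf : f ∈ CcS X) (hFK : ∀ n, tsupport (F n) ⊆ K)
    (hfK : tsupport f ⊆ K) (hFf : Tendsto (fun n => ‖F n - f‖) atTop (𝓝 0)) :
    Tendsto (fun n => ρ.toFun (F n)) atTop (𝓝 (ρ.toFun f)) := by
  rw [tendsto_iff_dist_tendsto_zero]
  refine squeeze_zero (fun n => dist_nonneg) (fun n => ?_)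
    (by simpa using (hFf.const_mul 2).mul_const (muR ρ K).toReal)
  exact (ρ.abs_toFun_sub_le h𝔅 hK (hF n) hf (hFK n) hfK).trans_eq' (Real.dist_eq _ _)

end QLF

theorem qlf_continuity_estimates_general {X : Type u} [TopologicalSpace X]
    [LocallyCompactSpace X] [T2Space X]
    (𝔅 : Set (X →ᵇ ℝ)) (h𝔅 : 𝔅 = CcS X ∨ 𝔅 = C0S X) (ρ : QLF 𝔅) :
    (∀ (K : Set X) (f g : X →ᵇ ℝ), IsCompact K → f ∈ CcS X → g ∈ CcS X →
      tsupport (f : X → ℝ) ⊆ K → tsupport (g : X → ℝ) ⊆ K → 0 ≤ f → 0 ≤ g →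
      |ρ.toFun f - ρ.toFun g| ≤ ‖f - g‖ * (muR ρ K).toReal) ∧
    (∀ (K : Set X) (f g : X →ᵇ ℝ), IsCompact K → f ∈ CcS X → g ∈ CcS X →
      tsupport (f : X → ℝ) ⊆ K → tsupport (g : X → ℝ) ⊆ K →
      |ρ.toFun f - ρ.toFun g| ≤ 2 * ‖f - g‖ * (muR ρ K).toReal) ∧
    (∀ f : X →ᵇ ℝ, f ∈ CcS X →
      |ρ.toFun f| ≤ ‖f‖ * (muR ρ (tsupport (f : X → ℝ))).toReal) ∧
    (∀ (K : Set X), IsCompact K → ∀ (F : ℕ → X →ᵇ ℝ) (f : X →ᵇ ℝ),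
      (∀ n, F n ∈ CcS X) → f ∈ CcS X → (∀ n, tsupport ((F n : X → ℝ)) ⊆ K) →
      tsupport (f : X → ℝ) ⊆ K →
      Tendsto (fun n => ‖F n - f‖) atTop (nhds 0) →
      Tendsto (fun n => ρ.toFun (F n)) atTop (nhds (ρ.toFun f))) ∧
    (muR ρ Set.univ ≠ ∞ →
      ((∀ f : X →ᵇ ℝ, f ∈ CcS X → |ρ.toFun f| ≤ ‖f‖ * (muR ρ Set.univ).toReal) ∧
       (∀ f g : X →ᵇ ℝ, f ∈ CcS X → g ∈ CcS X → 0 ≤ f → 0 ≤ g →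
         |ρ.toFun f - ρ.toFun g| ≤ ‖f - g‖ * (muR ρ Set.univ).toReal) ∧
       (∀ f g : X →ᵇ ℝ, f ∈ CcS X → g ∈ CcS X →
         |ρ.toFun f - ρ.toFun g| ≤ 2 * ‖f - g‖ * (muR ρ Set.univ).toReal) ∧
       (∀ ε : ℝ, 0 < ε → ∃ δ : ℝ, 0 < δ ∧ ∀ f g : X →ᵇ ℝ, f ∈ CcS X → g ∈ CcS X →
         ‖f - g‖ < δ → |ρ.toFun f - ρ.toFun g| < ε))) := by
  have hC : CcS X ⊆ 𝔅 := by
    rcases h𝔅 with rfl | rfl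
    exacts [subset_rfl, CcS_subset_C0S]
  refine ⟨fun K f g hK hf hg hfK hgK hf0 hg0 =>
      ρ.abs_toFun_sub_le_of_nonneg hC hK hf hg hfK hgK hf0 hg0,
    fun K f g hK hf hg hfK hgK => ρ.abs_toFun_sub_le hC hK hf hg hfK hgK,
    fun f hf => ρ.abs_toFun_le hC hf hf subset_rfl,
    fun K hK F f hF hf hFK hfK => ρ.tendsto_toFun hC hK hF hf hFK hfK, fun hfin => ?_⟩
  set M := (muR ρ univ).toReal
  have hM := ρ.muR_toReal_le_univ hfin
  have hlip : ∀ f g : X →ᵇ ℝ, f ∈ CcS X → g ∈ CcS X →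
      |ρ.toFun f - ρ.toFun g| ≤ 2 * ‖f - g‖ * M :=
    fun f g hf hg => (ρ.abs_toFun_sub_le hC (IsCompact.union hf hg) hf hg subset_union_left
      subset_union_right).trans (by gcongr; exact hM _)
  refine ⟨fun f hf => (ρ.abs_toFun_le hC hf hf subset_rfl).trans (by gcongr; exact hM _),
    fun f g hf hg hf0 hg0 => (ρ.abs_toFun_sub_le_of_nonneg hC (IsCompact.union hf hg) hf hg
      subset_union_left subset_union_right hf0 hg0).trans (by gcongr; exact hM _),
    hlip, fun ε hε => ⟨ε / (2 * M + 1), by positivity, fun f g hf hg hfg => ?_⟩⟩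
  calc |ρ.toFun f - ρ.toFun g| ≤ (2 * M + 1) * ‖f - g‖ := by
        nlinarith [hlip f g hf hg, norm_nonneg (f - g)]
    _ < (2 * M + 1) * (ε / (2 * M + 1)) := by gcongr
    _ = ε := mul_div_cancel₀ ε (by positivity)

/-- continuity estimates for a quasi-linear functional `ρ` on `C_c(X)` (or
`C₀(X)`) in terms of the associated topological measure `μ = μ_ρ`: Lipschitz bounds on
functions supported in a compact `K`, continuity with respect to uniform convergence on
compact sets, and — when `μ(X) < ∞` — global bounds and uniform continuity. -/
theorem qlf_continuity_estimates {X : Type u} [TopologicalSpace X]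
    [LocallyCompactSpace X] [T2Space X] [ConnectedSpace X]
    (𝔅 : Set (X →ᵇ ℝ)) (h𝔅 : 𝔅 = CcS X ∨ 𝔅 = C0S X) (ρ : QLF 𝔅) :
    (∀ (K : Set X) (f g : X →ᵇ ℝ), IsCompact K → f ∈ CcS X → g ∈ CcS X →
      tsupport (f : X → ℝ) ⊆ K → tsupport (g : X → ℝ) ⊆ K → 0 ≤ f → 0 ≤ g →
      |ρ.toFun f - ρ.toFun g| ≤ ‖f - g‖ * (muR ρ K).toReal) ∧
    (∀ (K : Set X) (f g : X →ᵇ ℝ), IsCompact K → f ∈ CcS X → g ∈ CcS X →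
      tsupport (f : X → ℝ) ⊆ K → tsupport (g : X → ℝ) ⊆ K →
      |ρ.toFun f - ρ.toFun g| ≤ 2 * ‖f - g‖ * (muR ρ K).toReal) ∧
    (∀ f : X →ᵇ ℝ, f ∈ CcS X →
      |ρ.toFun f| ≤ ‖f‖ * (muR ρ (tsupport (f : X → ℝ))).toReal) ∧
    (∀ (K : Set X), IsCompact K → ∀ (F : ℕ → X →ᵇ ℝ) (f : X →ᵇ ℝ),
      (∀ n, F n ∈ CcS X) → f ∈ CcS X → (∀ n, tsupport ((F n : X → ℝ)) ⊆ K) →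
      tsupport (f : X → ℝ) ⊆ K →
      Tendsto (fun n => ‖F n - f‖) atTop (nhds 0) →
      Tendsto (fun n => ρ.toFun (F n)) atTop (nhds (ρ.toFun f))) ∧
    (muR ρ Set.univ ≠ ∞ →
      ((∀ f : X →ᵇ ℝ, f ∈ CcS X → |ρ.toFun f| ≤ ‖f‖ * (muR ρ Set.univ).toReal) ∧
       (∀ f g : X →ᵇ ℝ, f ∈ CcS X → g ∈ CcS X → 0 ≤ f → 0 ≤ g →
         |ρ.toFun f - ρ.toFun g| ≤ ‖f - g‖ * (muR ρ Set.univ).toReal) ∧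
       (∀ f g : X →ᵇ ℝ, f ∈ CcS X → g ∈ CcS X →
         |ρ.toFun f - ρ.toFun g| ≤ 2 * ‖f - g‖ * (muR ρ Set.univ).toReal) ∧
       (∀ ε : ℝ, 0 < ε → ∃ δ : ℝ, 0 < δ ∧ ∀ f g : X →ᵇ ℝ, f ∈ CcS X → g ∈ CcS X →
         ‖f - g‖ < δ → |ρ.toFun f - ρ.toFun g| < ε))) :=
  qlf_continuity_estimates_general 𝔅 h𝔅 ρ
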